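/- In hyperbolic space, if a geodesic triangle has a vertex C where the interior angle is θ, and d is the distance from C to the opposite side, then sin(θ/2)·cosh(d) ≤ 1. -/

import Mathlib

/-!
Apply an element of `SL(2, ℝ)` so that `A = r + ip` and `B = r + iq`, `p ≤ q`, lie on a vertical
line; the geodesic segment `AB` is then `{r + is | p ≤ s ≤ q}`. Write `C = r + x + iy`,
`R = x² + y²` and `t = y²`. Every hyperbolic cosine is then a rational function of the
coordinates, and `g = 4tpq · sinh a · sinh b` satisfies
`g² = ((R + p²)² - 4tp²) ((R + q²)² - 4tq²)`. It suffices to find a point `Z = r + is` of the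
segment with `(1 - cos θ) cosh² (dist C Z) ≤ 2`, which after clearing denominators reads
`g ((R + s²)² - 8ts²) ≤ ((R + p²)(R + q²) - 2t(p² + q²)) (R + s²)²`.
Take for `s` the height `√R` of the foot of the perpendicular from `C`, clamped to `[p, q]`;
the inequality then follows from the two bounds
`-((R - p²)(R - q²) + 4pq(R - t)) ≤ g ≤ (R + p²)(R + q²)` read off from `g²`.
-/

open Real Set UpperHalfPlane
open scoped MatrixGroups

section MetricSegment

variable {X : Type*} [PseudoMetricSpace X]

def metricSegment (x y : X) : Set X :=
  {z | dist x z + dist z y = dist x y}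

theorem metricSegment_comm (x y : X) : metricSegment x y = metricSegment y x := by
  ext z
  simp only [metricSegment, mem_ofPred_eq]
  rw [dist_comm x z, dist_comm z y, dist_comm x y, add_comm]

theorem smul_mem_metricSegment_smul_iff {M : Type*} [SMul M X] [IsIsometricSMul M X] (c : M)
    {x y z : X} : c • z ∈ metricSegment (c • x) (c • y) ↔ z ∈ metricSegment x y := by
  simp only [metricSegment, mem_ofPred_eq, dist_smul]

end MetricSegment

namespace HyperbolicTriangle

variable {R t p q g : ℝ}

theorem le_mul_of_sq_eq (ht : 0 ≤ t) (htR : t ≤ R) (hg : 0 ≤ g)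
    (hg2 : g ^ 2 = ((R + p ^ 2) ^ 2 - 4 * t * p ^ 2) * ((R + q ^ 2) ^ 2 - 4 * t * q ^ 2)) :
    g ≤ (R + p ^ 2) * (R + q ^ 2) := by
  have hp : 0 ≤ (R + p ^ 2) ^ 2 - 4 * t * p ^ 2 := by nlinarith [sq_nonneg (R - p ^ 2)]
  have hq : 0 ≤ (R + q ^ 2) ^ 2 - 4 * t * q ^ 2 := by nlinarith [sq_nonneg (R - q ^ 2)]
  have hR : 0 ≤ R := ht.trans htR
  refine (sq_le_sq₀ hg (by positivity)).1 ?_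
  rw [hg2, mul_pow]
  exact mul_le_mul (by nlinarith) (by nlinarith) hq (sq_nonneg _)

theorem neg_le_of_sq_eq (htR : t ≤ R) (hg : 0 ≤ g)
    (hg2 : g ^ 2 = ((R + p ^ 2) ^ 2 - 4 * t * p ^ 2) * ((R + q ^ 2) ^ 2 - 4 * t * q ^ 2)) :
    -((R - p ^ 2) * (R - q ^ 2) + 4 * p * q * (R - t)) ≤ g := by
  refine neg_le.2 (abs_le_of_sq_le_sq' ?_ hg).1
  have : g ^ 2 - ((R - p ^ 2) * (R - q ^ 2) + 4 * p * q * (R - t)) ^ 2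
      = 4 * (R - t) * ((q - p) * (R + p * q)) ^ 2 := by rw [hg2]; ring
  nlinarith [mul_nonneg (sub_nonneg.2 htR) (sq_nonneg ((q - p) * (R + p * q)))]

theorem bound_at_endpoint (ht : 0 ≤ t) (htR : t ≤ R) (hg : 0 ≤ g)
    (hgM : g ≤ (R + p ^ 2) * (R + q ^ 2)) (hnear : (R - p ^ 2) * (q ^ 2 - p ^ 2) ≤ 0) :
    g * ((R + p ^ 2) ^ 2 - 8 * t * p ^ 2)
      ≤ ((R + p ^ 2) * (R + q ^ 2) - 2 * t * (p ^ 2 + q ^ 2)) * (R + p ^ 2) ^ 2 := by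
  rcases le_total ((R + p ^ 2) ^ 2) (8 * t * p ^ 2) with hD | hD
  · have hN : 0 ≤ (R + p ^ 2) * (R + q ^ 2) - 2 * t * (p ^ 2 + q ^ 2) := by
      nlinarith [sq_nonneg (R - p ^ 2), sq_nonneg p, sq_nonneg q]
    nlinarith [mul_nonneg hg (sub_nonneg.2 hD), mul_nonneg hN (sq_nonneg (R + p ^ 2))]
  · have key : (p ^ 2 + q ^ 2) * (R + p ^ 2) ≤ 4 * p ^ 2 * (R + q ^ 2) := by
      nlinarith [sq_nonneg p, sq_nonneg q, sq_nonneg (p ^ 2 - q ^ 2), sq_nonneg (R - p ^ 2)]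
    nlinarith [mul_le_mul_of_nonneg_right hgM (sub_nonneg.2 hD),
      mul_nonneg (mul_nonneg ht (add_nonneg (ht.trans htR) (sq_nonneg p))) (sub_nonneg.2 key)]

theorem bound_at_foot (ht : 0 ≤ t) (htR : t ≤ R) (hpq : 0 ≤ p * q)
    (hgM : g ≤ (R + p ^ 2) * (R + q ^ 2))
    (hgL : -((R - p ^ 2) * (R - q ^ 2) + 4 * p * q * (R - t)) ≤ g) :
    g * ((R + R) ^ 2 - 8 * t * R)
      ≤ ((R + p ^ 2) * (R + q ^ 2) - 2 * t * (p ^ 2 + q ^ 2)) * (R + R) ^ 2 := by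
  have hR : 0 ≤ R := ht.trans htR
  rcases le_total R (2 * t) with h2t | h2t
  · nlinarith [mul_nonneg (mul_nonneg hR (sub_nonneg.2 h2t)) (neg_le_iff_add_nonneg.1 hgL),
      mul_nonneg (mul_nonneg hR (sub_nonneg.2 htR)) (sq_nonneg (R - p * q)),
      mul_nonneg (mul_nonneg hR (sub_nonneg.2 htR)) (mul_nonneg hpq (sub_nonneg.2 htR))]
  · nlinarith [mul_nonneg (mul_nonneg hR (sub_nonneg.2 h2t)) (sub_nonneg.2 hgM),
      mul_nonneg (mul_nonneg hR ht) (add_nonneg (sq_nonneg R) (sq_nonneg (p * q)))]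

theorem exists_mem_Icc_bound (ht : 0 ≤ t) (htR : t ≤ R) (hp : 0 ≤ p) (hpq : p ≤ q) (hg : 0 ≤ g)
    (hg2 : g ^ 2 = ((R + p ^ 2) ^ 2 - 4 * t * p ^ 2) * ((R + q ^ 2) ^ 2 - 4 * t * q ^ 2)) :
    ∃ s ∈ Icc p q, g * ((R + s ^ 2) ^ 2 - 8 * t * s ^ 2)
      ≤ ((R + p ^ 2) * (R + q ^ 2) - 2 * t * (p ^ 2 + q ^ 2)) * (R + s ^ 2) ^ 2 := by
  have hgM := le_mul_of_sq_eq ht htR hg hg2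
  have hpq2 : p ^ 2 ≤ q ^ 2 := pow_le_pow_left₀ hp hpq 2
  rcases le_total R (p ^ 2) with hRp | hpR
  · exact ⟨p, ⟨le_rfl, hpq⟩, bound_at_endpoint ht htR hg hgM
      (mul_nonpos_of_nonpos_of_nonneg (sub_nonpos.2 hRp) (sub_nonneg.2 hpq2))⟩
  rcases le_total (q ^ 2) R with hqR | hRq
  · refine ⟨q, ⟨hpq, le_rfl⟩, ?_⟩
    have := bound_at_endpoint ht htR hg (mul_comm (R + p ^ 2) _ ▸ hgM)
      (mul_nonpos_of_nonneg_of_nonpos (sub_nonneg.2 hqR) (sub_nonpos.2 hpq2))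
    linarith
  · have hR : 0 ≤ R := ht.trans htR
    refine ⟨√R, ⟨(le_sqrt hp hR).2 hpR, (sqrt_le_left (hp.trans hpq)).2 hRq⟩, ?_⟩
    rw [sq_sqrt hR]
    exact bound_at_foot ht htR (mul_nonneg hp (hp.trans hpq)) hgM (neg_le_of_sq_eq htR hg hg2)

end HyperbolicTriangle

theorem abs_sin_half_mul_le_one {θ k : ℝ} (hk : 0 ≤ k) (h : (1 - cos θ) * k ^ 2 ≤ 2) :
    |sin (θ / 2)| * k ≤ 1 :=
  calc |sin (θ / 2)| * k = √((1 - cos θ) / 2 * k ^ 2) := by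
        rw [abs_sin_half, sqrt_mul' _ (sq_nonneg k), sqrt_sq hk]
    _ ≤ 1 := sqrt_le_one.mpr (by linarith)

theorem abs_sin_half_arccos_mul_le_one {E k : ℝ} (hE : -1 ≤ E) (hk : 0 ≤ k)
    (h : (1 - E) * k ^ 2 ≤ 2) : |sin (arccos E / 2)| * k ≤ 1 := by
  refine abs_sin_half_mul_le_one hk ?_
  rcases le_total E 1 with hE1 | hE1
  · rwa [cos_arccos hE hE1]
  · simp [arccos_eq_zero.2 hE1]

theorem abs_sin_half_arccos_cosh_mul_le_one {a b c k : ℝ} (ha : 0 < a) (hb : 0 < b)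
    (hc : |c| ≤ a + b) (hk : 0 ≤ k)
    (h : (sinh a * sinh b + cosh c - cosh a * cosh b) * k ^ 2 ≤ 2 * (sinh a * sinh b)) :
    |sin (arccos ((cosh a * cosh b - cosh c) / (sinh a * sinh b)) / 2)| * k ≤ 1 := by
  have hσ : 0 < sinh a * sinh b := mul_pos (sinh_pos_iff.2 ha) (sinh_pos_iff.2 hb)
  refine abs_sin_half_arccos_mul_le_one ?_ hk ?_
  · have := cosh_le_cosh.2 (hc.trans (le_abs_self (a + b)))
    rw [cosh_add] at this
    rw [le_div_iff₀ hσ]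
    linarith
  · rw [one_sub_div hσ.ne', div_mul_eq_mul_div, div_le_iff₀ hσ]
    linarith

theorem Complex.exists_norm_sub_ofReal_eq {A B : ℂ} (h : A.re ≠ B.re) :
    ∃ e : ℝ, ‖A - e‖ = ‖B - e‖ := by
  have h' : A.re - B.re ≠ 0 := sub_ne_zero.2 h
  refine ⟨(Complex.normSq A - Complex.normSq B) / (2 * (A.re - B.re)), ?_⟩
  rw [← sq_eq_sq₀ (norm_nonneg _) (norm_nonneg _), ← Complex.normSq_eq_norm_sq,
    ← Complex.normSq_eq_norm_sq]
  simp only [Complex.normSq_apply, Complex.sub_re, Complex.sub_im, Complex.ofReal_re,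
    Complex.ofReal_im, sub_zero]
  field_simp
  ring

namespace UpperHalfPlane

def invSubSL (u : ℝ) : SL(2, ℝ) :=
  ⟨!![0, -1; 1, -u], by simp [Matrix.det_fin_two]⟩

theorem coe_invSubSL_smul (u : ℝ) (z : ℍ) : ((invSubSL u • z : ℍ) : ℂ) = -((z : ℂ) - u)⁻¹ := by
  rw [coe_specialLinearGroup_apply]
  simp [invSubSL, neg_div, sub_eq_add_neg]

theorem re_invSubSL_smul_of_norm_sub_eq {e ρ : ℝ} (hρ : 0 < ρ) {z : ℍ}
    (hz : ‖(z : ℂ) - e‖ = ρ) : (invSubSL (e - ρ) • z).re = -1 / (2 * ρ) := by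
  have hz2 : (z.re - e) ^ 2 + z.im ^ 2 = ρ ^ 2 := by
    rw [← hz, ← Complex.normSq_eq_norm_sq, Complex.normSq_apply]
    simp only [Complex.sub_re, Complex.sub_im, coe_re, coe_im, Complex.ofReal_re,
      Complex.ofReal_im, sub_zero]
    ring
  have hpos : 0 < z.re - e + ρ := by nlinarith [z.im_pos]
  rw [← coe_re, coe_invSubSL_smul, Complex.neg_re, Complex.inv_re, Complex.normSq_apply]
  simp only [Complex.sub_re, Complex.sub_im, coe_re, coe_im, Complex.ofReal_re,
    Complex.ofReal_im, sub_zero]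
  field_simp
  linear_combination hz2

theorem exists_SL2_smul_re_eq (A B : ℍ) : ∃ g : SL(2, ℝ), (g • A).re = (g • B).re := by
  rcases eq_or_ne A.re B.re with h | h
  · exact ⟨1, by simpa using h⟩
  obtain ⟨e, he⟩ := Complex.exists_norm_sub_ofReal_eq h
  have hρ : 0 < ‖(A : ℂ) - e‖ := norm_pos_iff.2 (sub_ne_zero.2 (A.ne_ofReal e))
  exact ⟨invSubSL (e - ‖(A : ℂ) - e‖), by
    rw [re_invSubSL_smul_of_norm_sub_eq hρ rfl, re_invSubSL_smul_of_norm_sub_eq hρ he.symm]⟩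

theorem mem_metricSegment_of_re_eq {A B Z : ℍ} (hA : A.re = Z.re) (hB : Z.re = B.re)
    (hAZ : A.im ≤ Z.im) (hZB : Z.im ≤ B.im) : Z ∈ metricSegment A B := by
  simp only [metricSegment, mem_ofPred_eq, dist_of_re_eq hA, dist_of_re_eq hB,
    dist_of_re_eq (hA.trans hB)]
  refine dist_add_dist_of_mem_segment ?_
  rw [segment_eq_Icc (log_le_log A.im_pos (hAZ.trans hZB))]
  exact ⟨log_le_log A.im_pos hAZ, log_le_log Z.im_pos hZB⟩

theorem exists_mem_metricSegment_of_re_eq_of_im_le {A B : ℍ} (C : ℍ) (hre : A.re = B.re)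
    (him : A.im ≤ B.im) :
    ∃ Z ∈ metricSegment A B,
      (sinh (dist B C) * sinh (dist A C) + cosh (dist A B) - cosh (dist B C) * cosh (dist A C))
        * cosh (dist C Z) ^ 2 ≤ 2 * (sinh (dist B C) * sinh (dist A C)) := by
  obtain ⟨x, hx⟩ : ∃ x, C.re - A.re = x := ⟨_, rfl⟩
  obtain ⟨p, hp⟩ : ∃ p, A.im = p := ⟨_, rfl⟩
  obtain ⟨q, hq⟩ : ∃ q, B.im = q := ⟨_, rfl⟩
  obtain ⟨y, hy⟩ : ∃ y, C.im = y := ⟨_, rfl⟩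
  have hp0 : 0 < p := hp ▸ A.im_pos
  have hy0 : 0 < y := hy ▸ C.im_pos
  have hq0 : 0 < q := hq ▸ B.im_pos
  have ha : cosh (dist B C) = (x ^ 2 + y ^ 2 + q ^ 2) / (2 * y * q) := by
    rw [cosh_dist', ← hre, sub_sq_comm, hx, hq, hy]; ring
  have hb : cosh (dist A C) = (x ^ 2 + y ^ 2 + p ^ 2) / (2 * y * p) := by
    rw [cosh_dist', sub_sq_comm, hx, hp, hy]; ring
  have hc : cosh (dist A B) = (p ^ 2 + q ^ 2) / (2 * p * q) := by
    rw [cosh_dist', hre, sub_self, hp, hq]; ring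
  set σ := sinh (dist B C) * sinh (dist A C) with hσ
  set g := 4 * y ^ 2 * p * q * σ with hg
  have hg0 : 0 ≤ g := by
    have : 0 ≤ σ := mul_nonneg (sinh_nonneg_iff.2 dist_nonneg) (sinh_nonneg_iff.2 dist_nonneg)
    positivity
  have hg2 : g ^ 2 = ((x ^ 2 + y ^ 2 + p ^ 2) ^ 2 - 4 * y ^ 2 * p ^ 2)
      * ((x ^ 2 + y ^ 2 + q ^ 2) ^ 2 - 4 * y ^ 2 * q ^ 2) := by
    simp only [hg, hσ, mul_pow, sinh_sq, ha, hb]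
    field_simp
    ring
  obtain ⟨s, ⟨hps, hsq⟩, hs⟩ := HyperbolicTriangle.exists_mem_Icc_bound (sq_nonneg y)
    (le_add_of_nonneg_left (sq_nonneg x)) hp0.le (hp ▸ hq ▸ him) hg0 hg2
  have hs0 : 0 < s := hp0.trans_le hps
  refine ⟨mk ⟨A.re, s⟩ hs0, mem_metricSegment_of_re_eq rfl hre (hp ▸ hps) (hq ▸ hsq), ?_⟩
  have hk : cosh (dist C (mk ⟨A.re, s⟩ hs0)) = (x ^ 2 + y ^ 2 + s ^ 2) / (2 * y * s) := by
    rw [cosh_dist']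
    change ((C.re - A.re) ^ 2 + C.im ^ 2 + s ^ 2) / (2 * C.im * s) = _
    rw [hx, hy]
  have hσg : σ = g / (4 * y ^ 2 * p * q) := by rw [hg]; field_simp
  rw [ha, hb, hc, hk, hσg]
  field_simp
  linarith

theorem exists_mem_metricSegment_of_re_eq {A B : ℍ} (C : ℍ) (hre : A.re = B.re) :
    ∃ Z ∈ metricSegment A B,
      (sinh (dist B C) * sinh (dist A C) + cosh (dist A B) - cosh (dist B C) * cosh (dist A C))
        * cosh (dist C Z) ^ 2 ≤ 2 * (sinh (dist B C) * sinh (dist A C)) := by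
  rcases le_total A.im B.im with him | him
  · exact exists_mem_metricSegment_of_re_eq_of_im_le C hre him
  obtain ⟨Z, hZ, h⟩ := exists_mem_metricSegment_of_re_eq_of_im_le C hre.symm him
  refine ⟨Z, metricSegment_comm A B ▸ hZ, ?_⟩
  rwa [dist_comm B A, mul_comm (sinh (dist A C)), mul_comm (cosh (dist A C))] at h

theorem exists_mem_metricSegment_cosh_sq_le (A B C : ℍ) :
    ∃ Z ∈ metricSegment A B,
      (sinh (dist B C) * sinh (dist A C) + cosh (dist A B) - cosh (dist B C) * cosh (dist A C))
        * cosh (dist C Z) ^ 2 ≤ 2 * (sinh (dist B C) * sinh (dist A C)) := by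
  obtain ⟨g, hg⟩ := exists_SL2_smul_re_eq A B
  obtain ⟨Z, hZ, h⟩ := exists_mem_metricSegment_of_re_eq (g • C) hg
  rw [← smul_inv_smul g Z] at hZ h
  simp only [dist_smul] at h
  exact ⟨g⁻¹ • Z, (smul_mem_metricSegment_smul_iff g).1 hZ, h⟩

end UpperHalfPlane

/-- In the hyperbolic plane (upper half-plane model), for a geodesic triangle
with vertices `A B C`, angle `θ` at `C` (defined through the hyperbolic law of
cosines) and distance `d` from `C` to the side opposite `C` (the geodesic
segment from `A` to `B`), one has `sin (θ/2) * cosh d ≤ 1`. -/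
theorem stmt_3 (A B C : UpperHalfPlane) (hAC : A ≠ C) (hBC : B ≠ C)
    (a b c θ d : ℝ)
    (ha : a = dist B C) (hb : b = dist A C) (hc : c = dist A B)
    (hθ : θ = Real.arccos
      ((Real.cosh a * Real.cosh b - Real.cosh c) / (Real.sinh a * Real.sinh b)))
    (hd : d = Metric.infDist C {Z : UpperHalfPlane | dist A Z + dist Z B = dist A B}) :
    Real.sin (θ / 2) * Real.cosh d ≤ 1 := by
  obtain ⟨Z, hZ, hk⟩ := exists_mem_metricSegment_cosh_sq_le A B C
  have hdZ : cosh d ≤ cosh (dist C Z) := by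
    rw [cosh_le_cosh, abs_of_nonneg dist_nonneg, hd, abs_of_nonneg Metric.infDist_nonneg]
    exact Metric.infDist_le_dist_of_mem hZ
  have hcab : |c| ≤ a + b := by
    rw [hc, abs_of_nonneg dist_nonneg, ha, hb, add_comm]
    exact dist_triangle_right A B C
  calc sin (θ / 2) * cosh d ≤ |sin (θ / 2)| * cosh (dist C Z) :=
        mul_le_mul (le_abs_self _) hdZ (cosh_pos _).le (abs_nonneg _)
    _ ≤ 1 := by
      subst ha hb hc hθ
      exact abs_sin_half_arccos_cosh_mul_le_one (dist_pos.2 hBC) (dist_pos.2 hAC) hcab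
        (cosh_pos _).le hk
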